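/- For u ∈ A_{2n}(4312), there exist no integers v_1 ≤ v_2 with v_1 ↦ (v_2 ↦ u) a 4312-avoiding alternating permutation of {1,...,2n+2} if and only if g(u) = u_1, where g(u) = min{2n+1, u_i : ∃ i < j < k with u_j < u_k < u_i}. -/

import Mathlib

/-- `u` is a permutation of `{1,...,m}`, given as the word `u 0, u 1, ..., u (m-1)`. -/
def IsPermOn (m : ℕ) (u : Fin m → ℕ) : Prop :=
  Function.Injective u ∧ ∀ i, u i ∈ Finset.Icc 1 m

/-- up-down (alternating): u 0 < u 1 > u 2 < u 3 > ... -/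
def UpDown (m : ℕ) (u : Fin m → ℕ) : Prop :=
  ∀ i : ℕ, ∀ h : i + 1 < m,
    (i % 2 = 0 → u ⟨i, by omega⟩ < u ⟨i + 1, h⟩) ∧
    (i % 2 = 1 → u ⟨i + 1, h⟩ < u ⟨i, by omega⟩)

/-- down-up: u 0 > u 1 < u 2 > u 3 < ... -/
def DownUp (m : ℕ) (u : Fin m → ℕ) : Prop :=
  ∀ i : ℕ, ∀ h : i + 1 < m,
    (i % 2 = 0 → u ⟨i + 1, h⟩ < u ⟨i, by omega⟩) ∧
    (i % 2 = 1 → u ⟨i, by omega⟩ < u ⟨i + 1, h⟩)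

/-- `u` contains the pattern `σ`. -/
def Contains {m k : ℕ} (u : Fin m → ℕ) (σ : Fin k → ℕ) : Prop :=
  ∃ g : Fin k → Fin m, StrictMono g ∧ ∀ a b : Fin k, u (g a) < u (g b) ↔ σ a < σ b

def Avoids {m k : ℕ} (u : Fin m → ℕ) (σ : Fin k → ℕ) : Prop := ¬ Contains u σ

/-- The set `A_m(σ)` of σ-avoiding up-down alternating permutations of `{1,...,m}`. -/
def AvoidSet (m : ℕ) {k : ℕ} (σ : Fin k → ℕ) : Set (Fin m → ℕ) :=
  {u | IsPermOn m u ∧ UpDown m u ∧ Avoids u σ}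

def p1234 : Fin 4 → ℕ := ![1, 2, 3, 4]
def p1243 : Fin 4 → ℕ := ![1, 2, 4, 3]
def p2143 : Fin 4 → ℕ := ![2, 1, 4, 3]
def p4312 : Fin 4 → ℕ := ![4, 3, 1, 2]
def p3412 : Fin 4 → ℕ := ![3, 4, 1, 2]

/-- `f(u)`: max over 0 and the smaller entries of 21-patterns of `u`. -/
noncomputable def fval {m : ℕ} (u : Fin m → ℕ) : ℕ :=
  sSup ({0} ∪ {x | ∃ i j : Fin m, i < j ∧ u j < u i ∧ x = u j})

/-- `e(u)`: max over 0 and the smallest entries of 132-patterns of `u`. -/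
noncomputable def eval' {m : ℕ} (u : Fin m → ℕ) : ℕ :=
  sSup ({0} ∪ {x | ∃ i j k : Fin m, i < j ∧ j < k ∧ u i < u k ∧ u k < u j ∧ x = u i})

/-- `g(u)`: min over m+1 and the largest entries of 312-patterns of `u`. -/
noncomputable def gval {m : ℕ} (u : Fin m → ℕ) : ℕ :=
  sInf ({m + 1} ∪ {x | ∃ i j k : Fin m, i < j ∧ j < k ∧ u j < u k ∧ u k < u i ∧ x = u i})

/-- `h(u)`: min over m+1 and the larger entries of 12-patterns of `u`. -/
noncomputable def hval {m : ℕ} (u : Fin m → ℕ) : ℕ :=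
  sInf ({m + 1} ∪ {x | ∃ i j : Fin m, i < j ∧ u i < u j ∧ x = u j})

/-- the operation `v ↦ u`: prepend `v`, increasing every entry `≥ v` by 1. -/
def ins {m : ℕ} (v : ℕ) (u : Fin m → ℕ) : Fin (m + 1) → ℕ :=
  Fin.cases v (fun j => if u j < v then u j else u j + 1)

/-- standardization of a word with distinct entries. -/
def stWord {k : ℕ} (r : Fin k → ℕ) : Fin k → ℕ :=
  fun j => (Finset.univ.filter (fun i => r i ≤ r j)).card

/-! Prepending `v` to a word `u` creates a 4312 exactly when `u` already contains one or has a 312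
whose largest entry is below `v`. In `v₁ ↦ (v₂ ↦ u)` alternation forces `u₁ < v₂`, and the entry
coming from `v₂` can serve as the 4; so an extension exists iff `u` has no 312 with largest entry at
most `u₁`, and then `v₁ = v₂ = u₁ + 1` works. A 312 with largest entry below `u₁` would give a 4312
with `u₁` in front, so `u₁ ≤ g(u)` always, and the condition says exactly `g(u) ≠ u₁`. (The paper's `u₁` is
`u ⟨0, _⟩` here.) -/

def Has312Below {m : ℕ} (u : Fin m → ℕ) (t : ℕ) : Prop :=
  ∃ i j k : Fin m, i < j ∧ j < k ∧ u j < u k ∧ u k < u i ∧ u i < t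

theorem Has312Below.mono {m : ℕ} {u : Fin m → ℕ} {s t : ℕ} (h : Has312Below u s) (hst : s ≤ t) :
    Has312Below u t := by
  obtain ⟨i, j, k, hij, hjk, h1, h2, h3⟩ := h
  exact ⟨i, j, k, hij, hjk, h1, h2, h3.trans_le hst⟩

theorem contains_p4312_iff {m : ℕ} {w : Fin m → ℕ} :
    Contains w p4312 ↔ ∃ a b c d : Fin m, a < b ∧ b < c ∧ c < d ∧
      w c < w d ∧ w d < w b ∧ w b < w a := by
  constructor
  · rintro ⟨g, hmono, hiff⟩
    exact ⟨g 0, g 1, g 2, g 3, hmono (by decide), hmono (by decide), hmono (by decide),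
      (hiff 2 3).2 (by decide), (hiff 3 1).2 (by decide), (hiff 1 0).2 (by decide)⟩
  · rintro ⟨a, b, c, d, hab, hbc, hcd, h1, h2, h3⟩
    refine ⟨![a, b, c, d], Fin.strictMono_iff_lt_succ.mpr fun i => ?_, fun i j => ?_⟩
    · fin_cases i <;> simpa
    · fin_cases i <;> fin_cases j <;> simp [p4312] <;> omega

section ins

variable {m : ℕ} {v : ℕ} {u : Fin m → ℕ}

theorem ins_zero : ins v u 0 = v := rfl

theorem ins_succ (j : Fin m) : ins v u j.succ = if u j < v then u j else u j + 1 := rfl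

@[simp] theorem ins_succ_lt_ins_succ {i j : Fin m} :
    ins v u i.succ < ins v u j.succ ↔ u i < u j := by
  simp only [ins_succ]; split_ifs <;> omega

@[simp] theorem ins_succ_lt_ins_zero {i : Fin m} : ins v u i.succ < ins v u 0 ↔ u i < v := by
  simp only [ins_zero, ins_succ]; split_ifs <;> omega

@[simp] theorem ins_zero_lt_ins_succ {i : Fin m} : ins v u 0 < ins v u i.succ ↔ v ≤ u i := by
  simp only [ins_zero, ins_succ]; split_ifs <;> omega

theorem isPermOn_ins (hv : v ∈ Finset.Icc 1 (m + 1)) (hu : IsPermOn m u) :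
    IsPermOn (m + 1) (ins v u) := by
  obtain ⟨hinj, hrange⟩ := hu
  have hv' := Finset.mem_Icc.mp hv
  refine ⟨fun a b hab => ?_, fun i => ?_⟩
  · cases a using Fin.cases <;> cases b using Fin.cases <;>
      simp only [ins_zero, ins_succ, Fin.succ_inj] at hab ⊢
    all_goals first
      | rfl
      | (split_ifs at hab <;> omega)
      | exact hinj (by split_ifs at hab <;> omega)
  · cases i using Fin.cases with
    | zero => exact hv
    | succ j =>
      have := Finset.mem_Icc.mp (hrange j)
      simp only [ins_succ, Finset.mem_Icc]
      split_ifs <;> omega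

theorem upDown_ins_iff (h0 : 0 < m) :
    UpDown (m + 1) (ins v u) ↔ DownUp m u ∧ v ≤ u ⟨0, h0⟩ := by
  constructor
  · intro H
    refine ⟨fun i hi => ?_, ins_zero_lt_ins_succ.mp ((H 0 (by omega)).1 rfl)⟩
    have Hi := H (i + 1) (by omega)
    exact ⟨fun hp => (ins_succ_lt_ins_succ (i := ⟨i + 1, hi⟩) (j := ⟨i, by omega⟩)).mp
        (Hi.2 (by omega)),
      fun hp => (ins_succ_lt_ins_succ (i := ⟨i, by omega⟩) (j := ⟨i + 1, hi⟩)).mp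
        (Hi.1 (by omega))⟩
  · rintro ⟨H, hv⟩ (_ | i) hi
    · exact ⟨fun _ => ins_zero_lt_ins_succ.mpr hv, by omega⟩
    · have Hi := H i (by omega)
      exact ⟨fun hp => (ins_succ_lt_ins_succ (i := ⟨i, by omega⟩) (j := ⟨i + 1, by omega⟩)).mpr
          (Hi.2 (by omega)),
        fun hp => (ins_succ_lt_ins_succ (i := ⟨i + 1, by omega⟩) (j := ⟨i, by omega⟩)).mpr
          (Hi.1 (by omega))⟩

theorem downUp_ins_iff (h0 : 0 < m) :
    DownUp (m + 1) (ins v u) ↔ UpDown m u ∧ u ⟨0, h0⟩ < v := by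
  constructor
  · intro H
    refine ⟨fun i hi => ?_, ins_succ_lt_ins_zero.mp ((H 0 (by omega)).1 rfl)⟩
    have Hi := H (i + 1) (by omega)
    exact ⟨fun hp => (ins_succ_lt_ins_succ (i := ⟨i, by omega⟩) (j := ⟨i + 1, hi⟩)).mp
        (Hi.2 (by omega)),
      fun hp => (ins_succ_lt_ins_succ (i := ⟨i + 1, hi⟩) (j := ⟨i, by omega⟩)).mp
        (Hi.1 (by omega))⟩
  · rintro ⟨H, hv⟩ (_ | i) hi
    · exact ⟨fun _ => ins_succ_lt_ins_zero.mpr hv, by omega⟩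
    · have Hi := H i (by omega)
      exact ⟨fun hp => (ins_succ_lt_ins_succ (i := ⟨i + 1, by omega⟩) (j := ⟨i, by omega⟩)).mpr
          (Hi.2 (by omega)),
        fun hp => (ins_succ_lt_ins_succ (i := ⟨i, by omega⟩) (j := ⟨i + 1, by omega⟩)).mpr
          (Hi.1 (by omega))⟩

theorem contains_p4312_ins_iff :
    Contains (ins v u) p4312 ↔ Contains u p4312 ∨ Has312Below u v := by
  simp only [contains_p4312_iff]
  constructor
  · rintro ⟨a, b, c, d, hab, hbc, hcd, h1, h2, h3⟩
    obtain ⟨b, rfl⟩ := Fin.exists_succ_eq.mpr (Fin.ne_zero_of_lt hab)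
    obtain ⟨c, rfl⟩ := Fin.exists_succ_eq.mpr (Fin.ne_zero_of_lt hbc)
    obtain ⟨d, rfl⟩ := Fin.exists_succ_eq.mpr (Fin.ne_zero_of_lt hcd)
    simp only [Fin.succ_lt_succ_iff, ins_succ_lt_ins_succ] at hbc hcd h1 h2
    cases a using Fin.cases with
    | zero => exact Or.inr ⟨b, c, d, hbc, hcd, h1, h2, ins_succ_lt_ins_zero.mp h3⟩
    | succ a =>
      simp only [Fin.succ_lt_succ_iff, ins_succ_lt_ins_succ] at hab h3
      exact Or.inl ⟨a, b, c, d, hab, hbc, hcd, h1, h2, h3⟩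
  · rintro (⟨a, b, c, d, hab, hbc, hcd, h1, h2, h3⟩ | ⟨i, j, k, hij, hjk, h1, h2, h3⟩)
    · exact ⟨a.succ, b.succ, c.succ, d.succ, by simpa, by simpa, by simpa, by simpa, by simpa,
        by simpa⟩
    · exact ⟨0, i.succ, j.succ, k.succ, Fin.succ_pos i, by simpa, by simpa, by simpa, by simpa,
        by simpa⟩

theorem Has312Below.of_ins_self (h : Has312Below (ins v u) v) : Has312Below u v := by
  obtain ⟨i, j, k, hij, hjk, h1, h2, h3⟩ := h
  obtain ⟨i, rfl⟩ := (Fin.exists_succ_eq (x := i)).mpr (by rintro rfl; exact lt_irrefl v h3)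
  obtain ⟨j, rfl⟩ := Fin.exists_succ_eq.mpr (Fin.ne_zero_of_lt hij)
  obtain ⟨k, rfl⟩ := Fin.exists_succ_eq.mpr (Fin.ne_zero_of_lt hjk)
  simp only [Fin.succ_lt_succ_iff, ins_succ_lt_ins_succ] at hij hjk h1 h2
  exact ⟨i, j, k, hij, hjk, h1, h2, ins_succ_lt_ins_zero.mp h3⟩

end ins

theorem gval_lt_iff {m : ℕ} {u : Fin m → ℕ} {t : ℕ} (ht : t ≤ m + 1) :
    gval u < t ↔ Has312Below u t := by
  constructor
  · intro h
    rcases Nat.sInf_mem (⟨m + 1, Or.inl rfl⟩ : ({m + 1} ∪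
        {x | ∃ i j k : Fin m, i < j ∧ j < k ∧ u j < u k ∧ u k < u i ∧ x = u i} : Set ℕ).Nonempty)
      with hg | ⟨i, j, k, hij, hjk, h1, h2, hg⟩
    · exact absurd (hg.symm.trans_lt h) (by omega)
    · exact ⟨i, j, k, hij, hjk, h1, h2, hg ▸ h⟩
  · rintro ⟨i, j, k, hij, hjk, h1, h2, h3⟩
    exact (Nat.sInf_le (Or.inr ⟨i, j, k, hij, hjk, h1, h2, rfl⟩)).trans_lt h3

theorem Avoids.not_has312Below_head {m : ℕ} {u : Fin m → ℕ} (hav : Avoids u p4312) (h0 : 0 < m) :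
    ¬Has312Below u (u ⟨0, h0⟩) := by
  rintro ⟨i, j, k, hij, hjk, h1, h2, h3⟩
  have hi : (⟨0, h0⟩ : Fin m) < i :=
    Fin.lt_def.mpr (Nat.pos_of_ne_zero fun hi => h3.ne (congrArg u (Fin.ext hi)))
  exact hav (contains_p4312_iff.mpr ⟨_, i, j, k, hi, hij, hjk, h1, h2, h3⟩)

theorem exists_ins_ins_mem_avoidSet_iff {m : ℕ} {u : Fin m → ℕ} (hu : u ∈ AvoidSet m p4312)
    (h0 : 0 < m) :
    (∃ v₁ v₂ : ℕ, v₁ ≤ v₂ ∧ ins v₁ (ins v₂ u) ∈ AvoidSet (m + 1 + 1) p4312) ↔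
      ¬Has312Below u (u ⟨0, h0⟩ + 1) := by
  obtain ⟨hperm, hud, hav⟩ := hu
  constructor
  · rintro ⟨v₁, v₂, -, -, hw_ud, hw_av⟩ h
    have hv₂ : u ⟨0, h0⟩ < v₂ :=
      ((downUp_ins_iff h0).mp ((upDown_ins_iff (Nat.succ_pos m)).mp hw_ud).1).2
    exact hw_av (contains_p4312_ins_iff.mpr (Or.inl (contains_p4312_ins_iff.mpr
      (Or.inr (h.mono hv₂)))))
  · intro h
    have hu0 := Finset.mem_Icc.mp (hperm.2 ⟨0, h0⟩)
    refine ⟨_, _, le_rfl, isPermOn_ins ?_ (isPermOn_ins ?_ hperm),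
      (upDown_ins_iff (Nat.succ_pos m)).mpr ⟨(downUp_ins_iff h0).mpr ⟨hud, Nat.lt_succ_self _⟩,
        le_rfl⟩, ?_⟩
    · exact Finset.mem_Icc.mpr (by omega)
    · exact Finset.mem_Icc.mpr (by omega)
    · rw [Avoids, contains_p4312_ins_iff, contains_p4312_ins_iff]
      rintro ((hc | h') | h')
      exacts [hav hc, h h', h h'.of_ins_self]

theorem stmt13 (n : ℕ) (hn : 1 ≤ n) (u : Fin (2 * n) → ℕ) (hu : u ∈ AvoidSet (2 * n) p4312) :
    (¬ ∃ v1 v2 : ℕ, v1 ≤ v2 ∧ ins v1 (ins v2 u) ∈ AvoidSet (2 * n + 1 + 1) p4312) ↔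
      gval u = u ⟨0, by omega⟩ := by
  have h0 : 0 < 2 * n := by omega
  have hu0 : u ⟨0, h0⟩ ≤ 2 * n := (Finset.mem_Icc.mp (hu.1.2 _)).2
  have head_le_gval : u ⟨0, h0⟩ ≤ gval u :=
    not_lt.mp fun h => hu.2.2.not_has312Below_head h0 ((gval_lt_iff (by omega)).mp h)
  rw [exists_ins_ins_mem_avoidSet_iff hu h0, not_not, ← gval_lt_iff (by omega)]
  omega
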